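/- arXiv:2510.06933 — 2 statements merged into one kernel-verified Lean document; each statement's English description precedes it below -/
import Mathlib

section
/- Let G be a graph of order n, e an edge of G, and α ∈ [1/2, 1]. Then for every 1 ≤ i ≤ n, the i-th largest eigenvalue of A_α(G) is at least the i-th largest eigenvalue of A_α(G − e), where G − e is obtained from G by deleting e. -/
/-- The `A_α`-matrix of a graph: `α·D(G) + (1-α)·A(G)`. -/
noncomputable def Aalpha {n : ℕ} (α : ℝ) (G : SimpleGraph (Fin n)) [DecidableRel G.Adj] :
    Matrix (Fin n) (Fin n) ℝ :=
  α • Matrix.diagonal (fun v => (G.degree v : ℝ)) + (1 - α) • G.adjMatrix ℝ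

lemma Aalpha_isHermitian {n : ℕ} (α : ℝ) (G : SimpleGraph (Fin n)) [DecidableRel G.Adj] :
    (Aalpha α G).IsHermitian := by
  apply Matrix.IsHermitian.ext
  intro i j
  by_cases h : G.Adj i j <;> by_cases hij : i = j <;>
    simp_all [Aalpha, Matrix.diagonal_apply, SimpleGraph.adj_comm, eq_comm]


/-- The `k`-th largest eigenvalue (1-indexed) of a Hermitian matrix. -/
noncomputable def eigDesc {n : ℕ} {M : Matrix (Fin n) (Fin n) ℝ} (hM : M.IsHermitian)
    (k : ℕ) : ℝ :=
  ((Finset.univ.val.map hM.eigenvalues).sort (· ≤ ·)).getD (n - k) 0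

/-!
For a spanning subgraph `H ≤ G` we have `A_α(G) - A_α(H) = A_α(G \ H)`, and for `α ≥ 1/2`
every `A_α`-matrix is positive semidefinite, because its quadratic form is a sum over the edges
`uv` of `α (x_u² + x_v²) + 2 (1 - α) x_u x_v = (x_u + x_v)² / 2 + (α - 1/2) (x_u - x_v)²`.
So the claim is Weyl's monotonicity theorem: adding a positive semidefinite matrix does not
decrease any eigenvalue. That follows from the Courant–Fischer argument: the span of the top `i`
eigenvectors of the smaller matrix and the span of the bottom `n - i + 1` eigenvectors of the
larger one meet in a nonzero vector, on which the two quadratic forms are compared.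
-/

open Matrix
open scoped InnerProductSpace

lemma Submodule.inf_ne_bot_of_finrank_lt_add {K V : Type*} [DivisionRing K] [AddCommGroup V]
    [Module K V] [FiniteDimensional K V] {W U : Submodule K V}
    (h : Module.finrank K V < Module.finrank K W + Module.finrank K U) : W ⊓ U ≠ ⊥ := by
  intro hbot
  have hsum := Submodule.finrank_sup_add_finrank_inf_eq W U
  have hsup := (W ⊔ U).finrank_le
  rw [hbot, finrank_bot] at hsum
  omega

namespace OrthonormalBasis
variable {ι 𝕜 E : Type*} [Fintype ι] [RCLike 𝕜] [NormedAddCommGroup E]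
  [InnerProductSpace 𝕜 E]

lemma repr_eq_zero_of_mem_span_image (b : OrthonormalBasis ι 𝕜 E) {s : Set ι} {x : E}
    (hx : x ∈ Submodule.span 𝕜 (b '' s)) {j : ι} (hj : j ∉ s) : b.repr x j = 0 := by
  rw [← b.coe_toBasis, Module.Basis.mem_span_image] at hx
  simpa using Finsupp.notMem_support_iff.mp fun h => hj (hx h)

lemma finrank_span_image (b : OrthonormalBasis ι 𝕜 E) (s : Finset ι) :
    Module.finrank 𝕜 (Submodule.span 𝕜 (b '' s)) = s.card := by
  classical
  have hb := b.orthonormal.linearIndependent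
  rw [← Finset.coe_image, finrank_span_finset_eq_card,
    Finset.card_image_of_injective _ hb.injective]
  rw [Finset.coe_image]
  exact (hb.linearIndepOn _).id_image

lemma norm_sq_eq_sum_repr (b : OrthonormalBasis ι 𝕜 E) (x : E) :
    ‖x‖ ^ 2 = ∑ i, ‖b.repr x i‖ ^ 2 := by
  rw [← b.repr.norm_map, EuclideanSpace.norm_sq_eq]

end OrthonormalBasis

namespace LinearMap.IsSymmetric

variable {𝕜 E : Type*} [RCLike 𝕜] [NormedAddCommGroup E] [InnerProductSpace 𝕜 E]
  [FiniteDimensional 𝕜 E] {T S : E →ₗ[𝕜] E} {n : ℕ} (hn : Module.finrank 𝕜 E = n)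

lemma re_inner_apply_self_eq_sum_eigenvalues (hT : T.IsSymmetric) (x : E) :
    RCLike.re ⟪T x, x⟫_𝕜 =
      ∑ i, hT.eigenvalues hn i * ‖(hT.eigenvectorBasis hn).repr x i‖ ^ 2 := by
  rw [← (hT.eigenvectorBasis hn).repr.inner_map_map, PiLp.inner_apply, map_sum]
  refine Finset.sum_congr rfl fun i _ => ?_
  rw [eigenvectorBasis_apply_self_apply, ← smul_eq_mul, inner_smul_real_left, RCLike.smul_re,
    inner_self_eq_norm_sq]

lemma eigenvalue_mul_norm_sq_le_re_inner (hT : T.IsSymmetric) {i : Fin n} {x : E}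
    (hx : x ∈ Submodule.span 𝕜 (hT.eigenvectorBasis hn '' Set.Iic i)) :
    hT.eigenvalues hn i * ‖x‖ ^ 2 ≤ RCLike.re ⟪T x, x⟫_𝕜 := by
  rw [re_inner_apply_self_eq_sum_eigenvalues hn, (hT.eigenvectorBasis hn).norm_sq_eq_sum_repr,
    Finset.mul_sum]
  refine Finset.sum_le_sum fun j _ => ?_
  by_cases hj : j ≤ i
  · exact mul_le_mul_of_nonneg_right (hT.eigenvalues_antitone hn hj) (by positivity)
  · simp [(hT.eigenvectorBasis hn).repr_eq_zero_of_mem_span_image hx hj]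

lemma re_inner_le_eigenvalue_mul_norm_sq (hT : T.IsSymmetric) {i : Fin n} {x : E}
    (hx : x ∈ Submodule.span 𝕜 (hT.eigenvectorBasis hn '' Set.Ici i)) :
    RCLike.re ⟪T x, x⟫_𝕜 ≤ hT.eigenvalues hn i * ‖x‖ ^ 2 := by
  rw [re_inner_apply_self_eq_sum_eigenvalues hn, (hT.eigenvectorBasis hn).norm_sq_eq_sum_repr,
    Finset.mul_sum]
  refine Finset.sum_le_sum fun j _ => ?_
  by_cases hj : i ≤ j
  · exact mul_le_mul_of_nonneg_right (hT.eigenvalues_antitone hn hj) (by positivity)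
  · simp [(hT.eigenvectorBasis hn).repr_eq_zero_of_mem_span_image hx hj]

theorem eigenvalues_mono (hT : T.IsSymmetric) (hS : S.IsSymmetric) (hTS : T ≤ S) (i : Fin n) :
    hT.eigenvalues hn i ≤ hS.eigenvalues hn i := by
  have hdim : Module.finrank 𝕜 E <
      Module.finrank 𝕜 (Submodule.span 𝕜 (hT.eigenvectorBasis hn '' Set.Iic i)) +
        Module.finrank 𝕜 (Submodule.span 𝕜 (hS.eigenvectorBasis hn '' Set.Ici i)) := by
    rw [hn, ← Finset.coe_Iic, ← Finset.coe_Ici, OrthonormalBasis.finrank_span_image,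
      OrthonormalBasis.finrank_span_image, Fin.card_Iic, Fin.card_Ici]
    omega
  obtain ⟨x, hx, hx0⟩ := Submodule.exists_mem_ne_zero_of_ne_bot
    (Submodule.inf_ne_bot_of_finrank_lt_add hdim)
  have hquad : RCLike.re ⟪T x, x⟫_𝕜 ≤ RCLike.re ⟪S x, x⟫_𝕜 := by
    simpa [inner_sub_left] using hTS.re_inner_nonneg_left x
  refine le_of_mul_le_mul_right ?_ (by positivity : 0 < ‖x‖ ^ 2)
  calc hT.eigenvalues hn i * ‖x‖ ^ 2 ≤ RCLike.re ⟪T x, x⟫_𝕜 :=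
        eigenvalue_mul_norm_sq_le_re_inner hn hT hx.1
    _ ≤ RCLike.re ⟪S x, x⟫_𝕜 := hquad
    _ ≤ hS.eigenvalues hn i * ‖x‖ ^ 2 := re_inner_le_eigenvalue_mul_norm_sq hn hS hx.2

end LinearMap.IsSymmetric

lemma Matrix.IsHermitian.map_eigenvalues_eq_map_toEuclideanLin_eigenvalues {n : ℕ}
    {M : Matrix (Fin n) (Fin n) ℝ} (hM : M.IsHermitian) :
    Finset.univ.val.map hM.eigenvalues = Finset.univ.val.map
      ((Matrix.isSymmetric_toEuclideanLin_iff.mpr hM).eigenvalues finrank_euclideanSpace_fin) := by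
  have hcharpoly : M.toEuclideanLin.charpoly = M.charpoly := by
    rw [Matrix.toEuclideanLin_eq_toLin_orthonormal, Matrix.charpoly_toLin]
  have h := (Matrix.isSymmetric_toEuclideanLin_iff.mpr hM).roots_charpoly_eq_eigenvalues
    finrank_euclideanSpace_fin
  rw [hcharpoly, hM.roots_charpoly_eq_eigenvalues] at h
  simpa using h

lemma eigDesc_eq_eigenvalues {n : ℕ} {M : Matrix (Fin n) (Fin n) ℝ} (hM : M.IsHermitian)
    {k : ℕ} (hk : 1 ≤ k) (hkn : k ≤ n) :
    eigDesc hM k = (Matrix.isSymmetric_toEuclideanLin_iff.mpr hM).eigenvalues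
      finrank_euclideanSpace_fin ⟨k - 1, by omega⟩ := by
  set μ := (Matrix.isSymmetric_toEuclideanLin_iff.mpr hM).eigenvalues finrank_euclideanSpace_fin
  have hsort :
      (Finset.univ.val.map hM.eigenvalues).sort (· ≤ ·) = List.ofFn (μ ∘ Fin.rev) := by
    refine List.Perm.eq_of_sortedLE ?_ ?_ ?_
    · exact (Multiset.pairwise_sort _ _).sortedLE
    · exact ((Matrix.isSymmetric_toEuclideanLin_iff.mpr hM).eigenvalues_antitone _).comp
        Fin.rev_anti |>.sortedLE_ofFn
    · rw [← Multiset.coe_eq_coe, Multiset.sort_eq,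
        hM.map_eigenvalues_eq_map_toEuclideanLin_eigenvalues, ← Fin.univ_val_map,
        ← Multiset.map_map]
      exact congrArg _ (Multiset.map_univ_val_equiv Fin.revPerm).symm
  rw [eigDesc, hsort, List.getD_eq_getElem _ _ (by simp; omega), List.getElem_ofFn]
  simp only [Function.comp_apply]
  congr 1
  ext
  simp only [Fin.val_rev]
  omega

lemma eigDesc_le_of_posSemidef_sub {n : ℕ} {A B : Matrix (Fin n) (Fin n) ℝ}
    (hA : A.IsHermitian) (hB : B.IsHermitian) (hAB : (B - A).PosSemidef)
    {k : ℕ} (hk : 1 ≤ k) (hkn : k ≤ n) : eigDesc hA k ≤ eigDesc hB k := by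
  rw [eigDesc_eq_eigenvalues hA hk hkn, eigDesc_eq_eigenvalues hB hk hkn]
  refine LinearMap.IsSymmetric.eigenvalues_mono _ _ _ ?_ _
  rwa [LinearMap.le_def, ← map_sub, isPositive_toEuclideanLin_iff]

section Aalpha
variable {n : ℕ} {α : ℝ} (G : SimpleGraph (Fin n)) [DecidableRel G.Adj]

lemma dotProduct_Aalpha_mulVec (x : Fin n → ℝ) :
    x ⬝ᵥ (Aalpha α G *ᵥ x) =
      ∑ i, ∑ j, if G.Adj i j then α * x i ^ 2 + (1 - α) * (x i * x j) else 0 := by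
  rw [Aalpha, add_mulVec, smul_mulVec, smul_mulVec, dotProduct_add, dotProduct_smul,
    dotProduct_smul, ← SimpleGraph.degMatrix, SimpleGraph.dotProduct_mulVec_degMatrix,
    SimpleGraph.dotProduct_mulVec_adjMatrix, smul_eq_mul, smul_eq_mul, Finset.mul_sum,
    Finset.mul_sum, ← Finset.sum_add_distrib]
  refine Finset.sum_congr rfl fun i _ => ?_
  rw [SimpleGraph.degree_eq_sum_if_adj, Finset.sum_mul, Finset.sum_mul, Finset.mul_sum,
    Finset.mul_sum, ← Finset.sum_add_distrib]
  refine Finset.sum_congr rfl fun j _ => ?_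
  split_ifs <;> ring

lemma Aalpha_posSemidef (hα : 1 / 2 ≤ α) : (Aalpha α G).PosSemidef := by
  refine .of_dotProduct_mulVec_nonneg (Aalpha_isHermitian α G) fun x => ?_
  have hswap : x ⬝ᵥ (Aalpha α G *ᵥ x) =
      ∑ i, ∑ j, if G.Adj j i then α * x j ^ 2 + (1 - α) * (x j * x i) else 0 := by
    rw [dotProduct_Aalpha_mulVec, Finset.sum_comm]
  suffices 0 ≤ x ⬝ᵥ (Aalpha α G *ᵥ x) + x ⬝ᵥ (Aalpha α G *ᵥ x) by
    rw [star_trivial]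
    linarith
  nth_rw 2 [hswap]
  rw [dotProduct_Aalpha_mulVec, ← Finset.sum_add_distrib]
  refine Finset.sum_nonneg fun i _ => ?_
  rw [← Finset.sum_add_distrib]
  refine Finset.sum_nonneg fun j _ => ?_
  by_cases hij : G.Adj i j
  · rw [if_pos hij, if_pos hij.symm]
    nlinarith [sq_nonneg (x i + x j), sq_nonneg (x i - x j)]
  · rw [if_neg hij, if_neg (mt G.adj_symm hij), add_zero]

variable {G} in
lemma Aalpha_sub_of_le {H : SimpleGraph (Fin n)} [DecidableRel H.Adj] (h : H ≤ G) :
    Aalpha α G - Aalpha α H = Aalpha α (G \ H) := by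
  have hadj : ∀ i j, (if G.Adj i j then 1 else 0 : ℝ) =
      (if H.Adj i j then 1 else 0) + (if (G \ H).Adj i j then 1 else 0) := by
    intro i j
    by_cases hH : H.Adj i j
    · simp [hH, h hH]
    · by_cases hG : G.Adj i j <;> simp [hH, hG]
  have hdeg : ∀ i, (G.degree i : ℝ) = H.degree i + (G \ H).degree i := by
    intro i
    simp only [SimpleGraph.degree_eq_sum_if_adj, ← Finset.sum_add_distrib, hadj]
  ext i j
  simp only [Aalpha, Matrix.sub_apply, Matrix.add_apply, Matrix.smul_apply, diagonal_apply,
    SimpleGraph.adjMatrix_apply, hdeg, hadj i j, smul_eq_mul]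
  split_ifs <;> ring

end Aalpha

theorem Aalpha_deleteEdge_monotone_general (n : ℕ) (G : SimpleGraph (Fin n)) [DecidableRel G.Adj]
    (e : Sym2 (Fin n))
    (H : SimpleGraph (Fin n)) [DecidableRel H.Adj] (hH : H = G.deleteEdges {e})
    (α : ℝ) (hα0 : 1 / 2 ≤ α) :
    ∀ i : ℕ, 1 ≤ i → i ≤ n →
      eigDesc (Aalpha_isHermitian α G) i ≥ eigDesc (Aalpha_isHermitian α H) i := by
  intro i hi hin
  have hHG : H ≤ G := hH ▸ G.deleteEdges_le {e}
  apply eigDesc_le_of_posSemidef_sub _ _ _ hi hin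
  rw [Aalpha_sub_of_le hHG]
  exact Aalpha_posSemidef _ hα0

/-- Edge-deletion monotonicity: for `α ∈ [1/2, 1]` and an edge `e` of `G`,
`λ_i(A_α(G)) ≥ λ_i(A_α(G − e))` for all `1 ≤ i ≤ n`. -/
theorem Aalpha_deleteEdge_monotone (n : ℕ) (G : SimpleGraph (Fin n)) [DecidableRel G.Adj]
    (e : Sym2 (Fin n)) (he : e ∈ G.edgeSet)
    (H : SimpleGraph (Fin n)) [DecidableRel H.Adj] (hH : H = G.deleteEdges {e})
    (α : ℝ) (hα0 : 1 / 2 ≤ α) (hα1 : α ≤ 1) :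
    ∀ i : ℕ, 1 ≤ i → i ≤ n →
      eigDesc (Aalpha_isHermitian α G) i ≥ eigDesc (Aalpha_isHermitian α H) i :=
  Aalpha_deleteEdge_monotone_general n G e H hH α hα0
end

section
/- If G is a connected graph of order n ≥ 3 with p pendant vertices, then the signless Laplacian Q(G) = D(G) + A(G) has at least p eigenvalues in [0,1] and at least p eigenvalues in [1, 2Δ(G)], counted with multiplicity. -/
/-!
Vectors supported on the pendant vertices form a `p`-dimensional space on which the quadratic
form of `Q` is the squared norm: each pendant vertex has degree one and, `G` being connected with
at least three vertices, no two pendant vertices are adjacent. By the min-max principle, `Q` has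
at least `p` eigenvalues `≤ 1` and at least `p` eigenvalues `≥ 1`; Gershgorin's theorem puts all
eigenvalues in `[0, 2Δ]`.
-/

/-- The signless Laplacian `Q(G) = D(G) + A(G)`. -/
noncomputable def signlessLaplacian {n : ℕ} (G : SimpleGraph (Fin n)) [DecidableRel G.Adj] :
    Matrix (Fin n) (Fin n) ℝ :=
  Matrix.diagonal (fun v => (G.degree v : ℝ)) + G.adjMatrix ℝ

lemma signlessLaplacian_isHermitian {n : ℕ} (G : SimpleGraph (Fin n))
    [DecidableRel G.Adj] : (signlessLaplacian G).IsHermitian := by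
  apply Matrix.IsHermitian.ext
  intro i j
  by_cases h : G.Adj i j <;> by_cases hij : i = j <;>
    simp_all [signlessLaplacian, Matrix.diagonal_apply, SimpleGraph.adj_comm, eq_comm]

open Matrix Finset Module

theorem finrank_iInf_ker_proj_compl {ι K : Type*} [Fintype ι] [Field K] (s : Finset ι) :
    finrank K (⨅ i ∈ (↑s : Set ι)ᶜ, LinearMap.ker (LinearMap.proj i : (ι → K) →ₗ[K] K) :
      Submodule K (ι → K)) = #s := by
  classical
  have e := LinearMap.iInfKerProjEquiv K (fun _ : ι => K) (I := ↑s) disjoint_compl_right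
    (by simp)
  rw [e.finrank_eq]
  simp

namespace Matrix.IsHermitian

variable {ι : Type*} [Fintype ι] [DecidableEq ι] {A : Matrix ι ι ℝ} (hA : A.IsHermitian)

-- `star hA.eigenvectorUnitary *ᵥ x` is the coordinate vector of `x` in the eigenbasis of `A`.

theorem vecMul_eigenvectorUnitary (x : ι → ℝ) :
    x ᵥ* (hA.eigenvectorUnitary : Matrix ι ι ℝ) =
      star (hA.eigenvectorUnitary : Matrix ι ι ℝ) *ᵥ x := by
  rw [star_eq_conjTranspose, conjTranspose_eq_transpose_of_trivial, mulVec_transpose]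

theorem dotProduct_mulVec_eq_sum_eigenvalues (x : ι → ℝ) :
    x ⬝ᵥ (A *ᵥ x) = ∑ i, hA.eigenvalues i *
      (star (hA.eigenvectorUnitary : Matrix ι ι ℝ) *ᵥ x) i ^ 2 := by
  conv_lhs => rw [hA.spectral_theorem, Unitary.conjStarAlgAut_apply, ← mulVec_mulVec,
    ← mulVec_mulVec, dotProduct_mulVec, vecMul_eigenvectorUnitary]
  simp only [dotProduct, mulVec_diagonal, Function.comp_apply, RCLike.ofReal_real_eq_id, id_eq]
  exact sum_congr rfl fun i _ => by ring

theorem dotProduct_self_eq_sum_sq (x : ι → ℝ) :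
    x ⬝ᵥ x = ∑ i, (star (hA.eigenvectorUnitary : Matrix ι ι ℝ) *ᵥ x) i ^ 2 := by
  calc x ⬝ᵥ x = x ⬝ᵥ ((hA.eigenvectorUnitary * star hA.eigenvectorUnitary :
        Matrix ι ι ℝ) *ᵥ x) := by rw [Unitary.coe_mul_star_self, one_mulVec]
    _ = _ := by
      rw [← mulVec_mulVec, dotProduct_mulVec, vecMul_eigenvectorUnitary]
      simp only [dotProduct, sq, Unitary.coe_star]

theorem exists_mem_eigencoords_ne_zero_and_eq_zero (W : Submodule ℝ (ι → ℝ)) (T : Finset ι)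
    (hT : #T < finrank ℝ W) :
    ∃ x ∈ W, star (hA.eigenvectorUnitary : Matrix ι ι ℝ) *ᵥ x ≠ 0 ∧
      ∀ i ∈ T, (star (hA.eigenvectorUnitary : Matrix ι ι ℝ) *ᵥ x) i = 0 := by
  set f : W →ₗ[ℝ] (T → ℝ) := LinearMap.funLeft ℝ ℝ ((↑) : T → ι) ∘ₗ
    (star (hA.eigenvectorUnitary : Matrix ι ι ℝ)).mulVecLin ∘ₗ W.subtype
  obtain ⟨⟨x, hxW⟩, hfx, hx⟩ := Submodule.exists_mem_ne_zero_of_ne_bot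
    (LinearMap.ker_ne_bot_of_finrank_lt (f := f) (by simpa using hT))
  refine ⟨x, hxW, fun h => hx ?_, fun i hi => congrFun hfx ⟨i, hi⟩⟩
  rw [Submodule.mk_eq_zero, ← one_mulVec x, ← Unitary.coe_mul_star_self hA.eigenvectorUnitary,
    ← mulVec_mulVec, Unitary.coe_star, h, mulVec_zero]

theorem finrank_le_card_eigenvalues_le (W : Submodule ℝ (ι → ℝ)) (c : ℝ)
    (hW : ∀ x ∈ W, x ⬝ᵥ (A *ᵥ x) ≤ c * (x ⬝ᵥ x)) :
    finrank ℝ W ≤ #{i | hA.eigenvalues i ≤ c} := by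
  by_contra! hlt
  obtain ⟨x, hxW, hy, hyT⟩ := hA.exists_mem_eigencoords_ne_zero_and_eq_zero W _ hlt
  obtain ⟨i₀, hi₀⟩ := Function.ne_iff.mp hy
  have hlt : c * (x ⬝ᵥ x) < x ⬝ᵥ (A *ᵥ x) := by
    rw [hA.dotProduct_mulVec_eq_sum_eigenvalues, hA.dotProduct_self_eq_sum_sq, mul_sum]
    refine sum_lt_sum (fun i _ => ?_) ⟨i₀, mem_univ _, ?_⟩
    · by_cases hi : hA.eigenvalues i ≤ c
      · simp [hyT i (by simpa using hi)]
      · gcongr; exact (not_le.mp hi).le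
    · have hc : c < hA.eigenvalues i₀ := not_le.mp fun h => hi₀ (hyT i₀ (by simpa using h))
      exact mul_lt_mul_of_pos_right hc (sq_pos_of_ne_zero hi₀)
  linarith [hW x hxW]

theorem finrank_le_card_le_eigenvalues (W : Submodule ℝ (ι → ℝ)) (c : ℝ)
    (hW : ∀ x ∈ W, c * (x ⬝ᵥ x) ≤ x ⬝ᵥ (A *ᵥ x)) :
    finrank ℝ W ≤ #{i | c ≤ hA.eigenvalues i} := by
  by_contra! hlt
  obtain ⟨x, hxW, hy, hyT⟩ := hA.exists_mem_eigencoords_ne_zero_and_eq_zero W _ hlt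
  obtain ⟨i₀, hi₀⟩ := Function.ne_iff.mp hy
  have hlt : x ⬝ᵥ (A *ᵥ x) < c * (x ⬝ᵥ x) := by
    rw [hA.dotProduct_mulVec_eq_sum_eigenvalues, hA.dotProduct_self_eq_sum_sq, mul_sum]
    refine sum_lt_sum (fun i _ => ?_) ⟨i₀, mem_univ _, ?_⟩
    · by_cases hi : c ≤ hA.eigenvalues i
      · simp [hyT i (by simpa using hi)]
      · gcongr; exact (not_le.mp hi).le
    · have hc : hA.eigenvalues i₀ < c := not_le.mp fun h => hi₀ (hyT i₀ (by simpa using h))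
      exact mul_lt_mul_of_pos_right hc (sq_pos_of_ne_zero hi₀)
  linarith [hW x hxW]

end Matrix.IsHermitian

namespace SimpleGraph

variable {V : Type*} {G : SimpleGraph V}

theorem Connected.not_adj_of_degree_eq_one [Fintype V] [DecidableRel G.Adj] (hG : G.Connected)
    (hV : 3 ≤ Fintype.card V) {u v : V} (hu : G.degree u = 1) (hv : G.degree v = 1) :
    ¬G.Adj u v := by
  classical
  intro huv
  obtain ⟨w, -, hw⟩ := exists_mem_notMem_of_card_lt_card (s := {u, v}) (t := univ)
    ((card_le_two).trans_lt (by rw [card_univ]; omega))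
  obtain ⟨d, -, hd, hdw⟩ := (hG.preconnected u w).some.exists_boundary_dart {u, v}
    (by simp) (by simpa using hw)
  have hunique {a b : V} (ha : G.degree a = 1) (hab : G.Adj a b) (had : G.Adj a d.snd) :
      d.snd = b := (degree_eq_one_iff_existsUnique_adj.mp ha).unique had hab
  rcases hd with hd | hd
  · exact hdw (Or.inr (hunique hu huv (hd ▸ d.adj)))
  · exact hdw (Or.inl (hunique hv huv.symm (hd ▸ d.adj)))

end SimpleGraph

section

variable {n : ℕ} (G : SimpleGraph (Fin n)) [DecidableRel G.Adj]

theorem signlessLaplacian_apply_self (k : Fin n) : signlessLaplacian G k k = G.degree k := by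
  simp [signlessLaplacian]

theorem signlessLaplacian_apply_of_ne {i j : Fin n} (h : i ≠ j) :
    signlessLaplacian G i j = G.adjMatrix ℝ i j := by
  simp [signlessLaplacian, h]

theorem sum_norm_signlessLaplacian_erase (k : Fin n) :
    ∑ j ∈ univ.erase k, ‖signlessLaplacian G k j‖ = G.degree k := by
  have hnorm : ∀ j, ‖G.adjMatrix ℝ k j‖ = G.adjMatrix ℝ k j := fun j =>
    Real.norm_of_nonneg (by by_cases h : G.Adj k j <;> simp [h])
  rw [sum_congr rfl fun j hj => by
      rw [signlessLaplacian_apply_of_ne G (ne_of_mem_erase hj).symm, hnorm],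
    sum_erase _ (by simp)]
  simp [SimpleGraph.adjMatrix_apply, ← G.card_neighborFinset_eq_degree,
    G.neighborFinset_eq_filter]

theorem signlessLaplacian_eigenvalues_mem_Icc (i : Fin n) :
    (signlessLaplacian_isHermitian G).eigenvalues i ∈ Set.Icc 0 (2 * (G.maxDegree : ℝ)) := by
  have hev : Module.End.HasEigenvalue (toLin' (signlessLaplacian G))
      ((signlessLaplacian_isHermitian G).eigenvalues i) := by
    rw [Module.End.hasEigenvalue_iff_mem_spectrum, spectrum_toLin']
    exact (signlessLaplacian_isHermitian G).eigenvalues_mem_spectrum_real i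
  obtain ⟨k, hk⟩ := eigenvalue_mem_ball hev
  rw [Metric.mem_closedBall, Real.dist_eq, signlessLaplacian_apply_self,
    sum_norm_signlessLaplacian_erase, abs_le] at hk
  have hΔ : (G.degree k : ℝ) ≤ G.maxDegree := mod_cast G.degree_le_maxDegree k
  constructor <;> linarith

theorem dotProduct_signlessLaplacian_mulVec_eq_self_of_support (x : Fin n → ℝ)
    (hdeg : ∀ v, x v ≠ 0 → G.degree v = 1)
    (hind : ∀ u v, x u ≠ 0 → x v ≠ 0 → ¬G.Adj u v) :
    x ⬝ᵥ (signlessLaplacian G *ᵥ x) = x ⬝ᵥ x := by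
  have hdiag : x ⬝ᵥ (diagonal (fun v => (G.degree v : ℝ)) *ᵥ x) = x ⬝ᵥ x := by
    simp only [dotProduct, mulVec_diagonal]
    refine sum_congr rfl fun v _ => ?_
    by_cases hv : x v = 0
    · simp [hv]
    · simp [hdeg v hv]
  have hadj : x ⬝ᵥ (G.adjMatrix ℝ *ᵥ x) = 0 := by
    simp only [dotProduct, SimpleGraph.adjMatrix_mulVec_apply]
    refine sum_eq_zero fun v _ => ?_
    by_cases hv : x v = 0
    · simp [hv]
    · rw [sum_eq_zero fun u hu => ?_, mul_zero]
      by_contra hu'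
      exact hind v u hv hu' (G.mem_neighborFinset v u |>.mp hu)
  rw [signlessLaplacian, add_mulVec, dotProduct_add, hdiag, hadj, add_zero]

end

open Finset in
/-- If `G` is connected of order `n ≥ 3` with `p` pendant vertices, then `Q(G)` has
at least `p` eigenvalues in `[0, 1]` and at least `p` eigenvalues in `[1, 2Δ(G)]`
(with multiplicity). -/
theorem signlessLaplacian_pendant_eigenvalue_count (n : ℕ) (hn : 3 ≤ n)
    (G : SimpleGraph (Fin n)) [DecidableRel G.Adj] (hconn : G.Connected) :
    (univ.filter fun v : Fin n => G.degree v = 1).card ≤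
      (univ.filter fun i : Fin n =>
        0 ≤ (signlessLaplacian_isHermitian G).eigenvalues i ∧
        (signlessLaplacian_isHermitian G).eigenvalues i ≤ 1).card ∧
    (univ.filter fun v : Fin n => G.degree v = 1).card ≤
      (univ.filter fun i : Fin n =>
        1 ≤ (signlessLaplacian_isHermitian G).eigenvalues i ∧
        (signlessLaplacian_isHermitian G).eigenvalues i ≤ 2 * (G.maxDegree : ℝ)).card := by
  set hQ := signlessLaplacian_isHermitian G
  set P : Finset (Fin n) := {v | G.degree v = 1}
  set W : Submodule ℝ (Fin n → ℝ) :=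
    ⨅ v ∈ (↑P : Set (Fin n))ᶜ, LinearMap.ker (LinearMap.proj v)
  have hW : ∀ x ∈ W, x ⬝ᵥ (signlessLaplacian G *ᵥ x) = x ⬝ᵥ x := by
    intro x hx
    have hsupp : ∀ v, x v ≠ 0 → G.degree v = 1 := fun v hv => by
      by_contra h
      exact hv (by simpa [W, P, h] using (Submodule.mem_iInf _).mp hx v)
    exact dotProduct_signlessLaplacian_mulVec_eq_self_of_support G x hsupp
      fun u v hu hv => hconn.not_adj_of_degree_eq_one (by simpa using hn) (hsupp u hu) (hsupp v hv)
  have hdim : finrank ℝ W = #P := finrank_iInf_ker_proj_compl P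
  have hbounds := signlessLaplacian_eigenvalues_mem_Icc G
  constructor
  · calc #P = finrank ℝ W := hdim.symm
      _ ≤ #{i | hQ.eigenvalues i ≤ 1} :=
        hQ.finrank_le_card_eigenvalues_le W 1 fun x hx => by rw [hW x hx, one_mul]
      _ = _ := congrArg card <| filter_congr fun i _ => ⟨fun h => ⟨(hbounds i).1, h⟩, And.right⟩
  · calc #P = finrank ℝ W := hdim.symm
      _ ≤ #{i | 1 ≤ hQ.eigenvalues i} :=
        hQ.finrank_le_card_le_eigenvalues W 1 fun x hx => by rw [hW x hx, one_mul]
      _ = _ := congrArg card <| filter_congr fun i _ => ⟨fun h => ⟨h, (hbounds i).2⟩, And.left⟩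
end
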